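/- For every rational number a, the set of triples (x, y, z) of rational numbers satisfying xyz(x + y + z) = a is infinite. -/

import Mathlib

/-!
For admissible `s`, Elkies's triple satisfies `x y z = a r` and `x + y + z = 1 / r` with
`r = (s⁴ - 4a)(3s⁴ + 4a) / (2s⁵(s⁴ + 12a))`, so `x y z (x + y + z) = a`; this needs no separate
treatment of `a = 0`, where `y = 0`. Only finitely many `s` are inadmissible, and each value of `z`
comes from at most five `s`, the roots of `s⁵ - 6zs⁴ + 12as - 8az`, so the triples are infinitely
many.
-/

open Polynomial

section Elkies

variable {K : Type*} [Field K]

def elkiesX (a s : K) : K := (s ^ 4 - 4 * a) ^ 2 / (2 * s ^ 3 * (s ^ 4 + 12 * a))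

def elkiesY (a s : K) : K :=
  2 * a * (3 * s ^ 4 + 4 * a) ^ 2 / (s ^ 3 * (s ^ 4 - 4 * a) * (s ^ 4 + 12 * a))

def elkiesZ (a s : K) : K := s * (s ^ 4 + 12 * a) / (2 * (3 * s ^ 4 + 4 * a))

def elkiesRatio (a s : K) : K :=
  (s ^ 4 - 4 * a) * (3 * s ^ 4 + 4 * a) / (2 * s ^ 5 * (s ^ 4 + 12 * a))

def elkiesAdmissible (a : K) : Set K :=
  {s | s ≠ 0 ∧ s ^ 4 - 4 * a ≠ 0 ∧ s ^ 4 + 12 * a ≠ 0 ∧ 3 * s ^ 4 + 4 * a ≠ 0}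

variable {a s : K}

theorem elkiesX_mul_elkiesY_mul_elkiesZ (h2 : (2 : K) ≠ 0) (hs : s ∈ elkiesAdmissible a) :
    elkiesX a s * elkiesY a s * elkiesZ a s = a * elkiesRatio a s := by
  obtain ⟨hs0, hd₁, hd₂, hd₃⟩ := hs
  unfold elkiesX elkiesY elkiesZ elkiesRatio
  field_simp

theorem elkiesX_add_elkiesY (h2 : (2 : K) ≠ 0) (hs0 : s ≠ 0) (hd₁ : s ^ 4 - 4 * a ≠ 0)
    (hd₂ : s ^ 4 + 12 * a ≠ 0) :
    elkiesX a s + elkiesY a s = s * (s ^ 4 + 12 * a) / (2 * (s ^ 4 - 4 * a)) := by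
  unfold elkiesX elkiesY
  rw [div_add_div _ _ (by positivity) (by positivity),
    div_eq_div_iff (by positivity) (by positivity)]
  -- `(u - 4a)³ + 4a(3u + 4a)² = u(u + 12a)²` for `u = s⁴`
  ring

theorem elkiesX_add_elkiesY_add_elkiesZ (h2 : (2 : K) ≠ 0) (hs : s ∈ elkiesAdmissible a) :
    elkiesX a s + elkiesY a s + elkiesZ a s = (elkiesRatio a s)⁻¹ := by
  obtain ⟨hs0, hd₁, hd₂, hd₃⟩ := hs
  rw [elkiesX_add_elkiesY h2 hs0 hd₁ hd₂, elkiesZ, elkiesRatio, inv_div,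
    div_add_div _ _ (by positivity) (by positivity),
    div_eq_div_iff (by positivity) (by positivity)]
  ring

theorem elkiesRatio_ne_zero (h2 : (2 : K) ≠ 0) (hs : s ∈ elkiesAdmissible a) :
    elkiesRatio a s ≠ 0 := by
  obtain ⟨hs0, hd₁, hd₂, hd₃⟩ := hs
  unfold elkiesRatio
  positivity

theorem elkies_solution (h2 : (2 : K) ≠ 0) (hs : s ∈ elkiesAdmissible a) :
    elkiesX a s * elkiesY a s * elkiesZ a s * (elkiesX a s + elkiesY a s + elkiesZ a s) = a := by
  rw [elkiesX_mul_elkiesY_mul_elkiesZ h2 hs, elkiesX_add_elkiesY_add_elkiesZ h2 hs,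
    mul_inv_cancel_right₀ (elkiesRatio_ne_zero h2 hs)]

theorem finite_compl_elkiesAdmissible [CharZero K] (a : K) :
    (elkiesAdmissible a)ᶜ.Finite := by
  set P : K[X] := X * (X ^ 4 - C (4 * a)) * (X ^ 4 + C (12 * a)) * (C 3 * X ^ 4 + C (4 * a))
  have hP : P.natDegree = 13 := by unfold P; compute_degree!
  refine (finite_setOfPred_isRoot (p := P) (ne_zero_of_natDegree_gt (n := 0) (by omega))).subset
    fun s hs => ?_
  simp only [elkiesAdmissible, Set.mem_compl_iff, Set.mem_ofPred_eq, not_and_or, not_not] at hs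
  simp only [P, Set.mem_ofPred_eq, IsRoot.def, eval_mul, eval_add, eval_sub, eval_pow, eval_X,
    eval_C]
  rcases hs with h | h | h | h <;> simp [h]

theorem finite_setOf_elkiesZ_eq [CharZero K] (a c : K) :
    {s | 3 * s ^ 4 + 4 * a ≠ 0 ∧ elkiesZ a s = c}.Finite := by
  set P : K[X] := X ^ 5 - C (6 * c) * X ^ 4 + C (12 * a) * X - C (8 * a * c)
  have hP : P.natDegree = 5 := by unfold P; compute_degree!
  refine (finite_setOfPred_isRoot (p := P) (ne_zero_of_natDegree_gt (n := 0) (by omega))).subset ?_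
  rintro s ⟨hd, hz⟩
  rw [elkiesZ, div_eq_iff (mul_ne_zero two_ne_zero hd)] at hz
  simp only [P, Set.mem_ofPred_eq, IsRoot.def, eval_mul, eval_add, eval_sub, eval_pow, eval_X,
    eval_C]
  linear_combination hz

end Elkies

theorem stmt_12 (a : ℚ) :
    {p : ℚ × ℚ × ℚ | p.1 * p.2.1 * p.2.2 * (p.1 + p.2.1 + p.2.2) = a}.Infinite := by
  intro hfin
  have hadm : (elkiesAdmissible a).Infinite := by
    simpa using (finite_compl_elkiesAdmissible a).infinite_compl
  refine hadm (Set.Finite.of_finite_fibers (elkiesZ a) ?_ ?_)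
  · refine (hfin.image fun p => p.2.2).subset ?_
    rintro _ ⟨s, hs, rfl⟩
    exact ⟨(elkiesX a s, elkiesY a s, elkiesZ a s), elkies_solution two_ne_zero hs, rfl⟩
  · rintro c -
    exact (finite_setOf_elkiesZ_eq a c).subset fun s ⟨hs, hz⟩ => ⟨hs.2.2.2, hz⟩
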